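/- arXiv:1307.4602 — 3 statements merged into one kernel-verified Lean document; each statement's English description precedes it below -/
import Mathlib

section
/- For all reals σ, β with 0 < σ < β, the following exact evaluation of the a-integral holds: ∫_{ℝ^l} exp( −|y − W·a|²/(2σ²) ) · exp( −aᵀ (WᵀW) a / (2(β² − σ²)) ) da = (σ/β)^l · √( (2π)^l (β² − σ²)^l / det(WᵀW) ) · exp( −yᵀê/(2σ²) ) · exp( −|ŷ|²/(2β²) ). -/
/-!
Completing the square in `a`, the integrand is `exp (-yᵀy / (2σ²))` times an unnormalised
Gaussian with precision `c WᵀW`, `c = β² / (σ² (β² - σ²))`, centred at `((β² - σ²) / β²) â`.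
Its integral is `√((2π)^l / det (c WᵀW))` times `exp` of half the quadratic form at the centre,
and the normal equations `WᵀW â = Wᵀy`, which give `|ŷ|² = yᵀŷ`, bring the exponent into the
stated form.
-/

open Matrix MeasureTheory Real

section QuadraticForm

variable {ι m n : Type*} [Fintype ι] [Fintype m] [Fintype n]

theorem dotProduct_mulVec_sub_sub {M : Matrix ι ι ℝ} (hM : M.IsSymm) (x m : ι → ℝ) :
    (x - m) ⬝ᵥ M *ᵥ (x - m) = x ⬝ᵥ M *ᵥ x - 2 * (M *ᵥ m ⬝ᵥ x) + m ⬝ᵥ M *ᵥ m := by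
  have h_swap : m ⬝ᵥ M *ᵥ x = M *ᵥ m ⬝ᵥ x := by
    rw [dotProduct_mulVec, ← hM.eq, vecMul_transpose, hM.eq]
  rw [mulVec_sub, dotProduct_sub, sub_dotProduct, sub_dotProduct, h_swap,
    dotProduct_comm x (M *ᵥ m)]
  ring

theorem dotProduct_transpose_mul_self_mulVec (W : Matrix m n ℝ) (x : n → ℝ) :
    x ⬝ᵥ (Wᵀ * W) *ᵥ x = W *ᵥ x ⬝ᵥ W *ᵥ x := by
  rw [← mulVec_mulVec, dotProduct_mulVec, vecMul_transpose]

theorem sub_mulVec_dotProduct_self (W : Matrix m n ℝ) (y : m → ℝ) (a : n → ℝ) :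
    (y - W *ᵥ a) ⬝ᵥ (y - W *ᵥ a) = y ⬝ᵥ y - 2 * (Wᵀ *ᵥ y ⬝ᵥ a) + a ⬝ᵥ (Wᵀ * W) *ᵥ a := by
  rw [sub_dotProduct, dotProduct_sub, dotProduct_sub, dotProduct_transpose_mul_self_mulVec,
    dotProduct_comm (W *ᵥ a) y, dotProduct_mulVec, ← mulVec_transpose]
  ring

end QuadraticForm

section Gaussian

variable {ι : Type*} [Fintype ι]

theorem integral_exp_neg_dotProduct_self_div_two :
    ∫ x : ι → ℝ, exp (-(x ⬝ᵥ x) / 2) = √(2 * π) ^ Fintype.card ι := by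
  have h_prod (x : ι → ℝ) : exp (-(x ⬝ᵥ x) / 2) = ∏ i, exp (-(1 / 2) * x i ^ 2) := by
    rw [← exp_sum, dotProduct, ← Finset.sum_neg_distrib, Finset.sum_div]
    ring_nf
  simp_rw [h_prod]
  rw [volume_pi, integral_fintype_prod_eq_pow fun t : ℝ ↦ exp (-(1 / 2) * t ^ 2),
    integral_gaussian]
  norm_num [mul_comm]

variable [DecidableEq ι]

theorem integral_exp_neg_mulVec_dotProduct_self_div_two {S : Matrix ι ι ℝ} (hS : S.det ≠ 0) :
    ∫ x : ι → ℝ, exp (-(S *ᵥ x ⬝ᵥ S *ᵥ x) / 2) = |S.det|⁻¹ * √(2 * π) ^ Fintype.card ι := by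
  have hS_meas : Measurable (toLin' S) := (toLin' S).continuous_of_finiteDimensional.measurable
  have hf : Continuous fun u : ι → ℝ ↦ exp (-(u ⬝ᵥ u) / 2) := by fun_prop
  rw [← integral_exp_neg_dotProduct_self_div_two, ← abs_inv, ← smul_eq_mul,
    ← ENNReal.toReal_ofReal (abs_nonneg _), ← integral_smul_measure,
    ← Real.map_matrix_volume_pi_eq_smul_volume_pi hS,
    integral_map hS_meas.aemeasurable hf.aestronglyMeasurable]
  simp only [toLin'_apply]

open scoped MatrixOrder in
theorem integral_exp_neg_dotProduct_mulVec_div_two {M : Matrix ι ι ℝ} (hM : M.PosDef) :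
    ∫ x : ι → ℝ, exp (-(x ⬝ᵥ M *ᵥ x) / 2) = √((2 * π) ^ Fintype.card ι / M.det) := by
  obtain ⟨S, hS, rfl⟩ := CStarAlgebra.isStrictlyPositive_iff_eq_star_mul_self.mp
    hM.isStrictlyPositive
  have hS_det : S.det ≠ 0 := (isUnit_iff_isUnit_det S).mp hS |>.ne_zero
  have h_det : (star S * S).det = S.det ^ 2 := by
    rw [det_mul, star_eq_conjTranspose, det_conjTranspose, star_trivial, sq]
  have h_quad (x : ι → ℝ) : x ⬝ᵥ (star S * S) *ᵥ x = S *ᵥ x ⬝ᵥ S *ᵥ x := by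
    rw [star_eq_conjTranspose, conjTranspose_eq_transpose_of_trivial,
      dotProduct_transpose_mul_self_mulVec]
  have h_sqrt_pow : √(2 * π) ^ Fintype.card ι = √((2 * π) ^ Fintype.card ι) := by
    rw [← sqrt_sq (by positivity : 0 ≤ √(2 * π) ^ Fintype.card ι), pow_right_comm,
      sq_sqrt (by positivity)]
  simp_rw [h_quad]
  rw [integral_exp_neg_mulVec_dotProduct_self_div_two hS_det, h_det, sqrt_div' _ (by positivity),
    sqrt_sq_eq_abs, div_eq_inv_mul, h_sqrt_pow]

theorem integral_exp_neg_dotProduct_mulVec_div_two_add {M : Matrix ι ι ℝ} (hM : M.PosDef)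
    (m : ι → ℝ) :
    ∫ x : ι → ℝ, exp (-(x ⬝ᵥ M *ᵥ x) / 2 + M *ᵥ m ⬝ᵥ x) =
      exp (m ⬝ᵥ M *ᵥ m / 2) * √((2 * π) ^ Fintype.card ι / M.det) := by
  have h_square (x : ι → ℝ) : exp (-(x ⬝ᵥ M *ᵥ x) / 2 + M *ᵥ m ⬝ᵥ x) =
      exp (-((x - m) ⬝ᵥ M *ᵥ (x - m)) / 2) * exp (m ⬝ᵥ M *ᵥ m / 2) := by
    rw [← exp_add, dotProduct_mulVec_sub_sub (isHermitian_iff_isSymm.mp hM.isHermitian)]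
    ring_nf
  simp_rw [h_square]
  rw [integral_mul_const, integral_sub_right_eq_self (fun x ↦ exp (-(x ⬝ᵥ M *ᵥ x) / 2)) m,
    integral_exp_neg_dotProduct_mulVec_div_two hM, mul_comm]

end Gaussian

section LeastSquares

variable {m n : Type*} [Fintype m] [Fintype n] [DecidableEq n]

theorem posDef_transpose_mul_self {W : Matrix m n ℝ} (hW : IsUnit (Wᵀ * W).det) :
    (Wᵀ * W).PosDef := by
  have h_inj : Function.Injective (Wᵀ * W).mulVec :=
    mulVec_injective_of_isUnit ((isUnit_iff_isUnit_det _).mpr hW)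
  have hW_inj : Function.Injective W.mulVec := fun x x' h ↦ h_inj <| by
    simp only [← mulVec_mulVec, h]
  simpa [conjTranspose_eq_transpose_of_trivial] using PosDef.conjTranspose_mul_self W hW_inj

variable {W : Matrix m n ℝ} (hW : IsUnit (Wᵀ * W).det) (y : m → ℝ)
include hW

theorem transpose_mul_self_mulVec_leastSquares :
    (Wᵀ * W) *ᵥ (Wᵀ * W)⁻¹ *ᵥ Wᵀ *ᵥ y = Wᵀ *ᵥ y := by
  rw [mulVec_mulVec, mul_nonsing_inv _ hW, one_mulVec]

theorem mulVec_leastSquares_dotProduct_self :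
    W *ᵥ (Wᵀ * W)⁻¹ *ᵥ Wᵀ *ᵥ y ⬝ᵥ W *ᵥ (Wᵀ * W)⁻¹ *ᵥ Wᵀ *ᵥ y =
      y ⬝ᵥ W *ᵥ (Wᵀ * W)⁻¹ *ᵥ Wᵀ *ᵥ y := by
  rw [← dotProduct_transpose_mul_self_mulVec, transpose_mul_self_mulVec_leastSquares hW,
    dotProduct_comm, mulVec_transpose, ← dotProduct_mulVec]

theorem exp_residual_mul_exp_prior {σ β : ℝ} (hσ : 0 < σ) (hσβ : σ < β) (a : n → ℝ) :
    exp (-((y - W *ᵥ a) ⬝ᵥ (y - W *ᵥ a)) / (2 * σ ^ 2)) *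
        exp (-(a ⬝ᵥ (Wᵀ * W) *ᵥ a) / (2 * (β ^ 2 - σ ^ 2))) =
      exp (-(y ⬝ᵥ y) / (2 * σ ^ 2)) *
        exp (-(a ⬝ᵥ ((β ^ 2 / (σ ^ 2 * (β ^ 2 - σ ^ 2))) • (Wᵀ * W)) *ᵥ a) / 2 +
          ((β ^ 2 / (σ ^ 2 * (β ^ 2 - σ ^ 2))) • (Wᵀ * W)) *ᵥ
            (((β ^ 2 - σ ^ 2) / β ^ 2) • (Wᵀ * W)⁻¹ *ᵥ Wᵀ *ᵥ y) ⬝ᵥ a) := by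
  have hβ : 0 < β := hσ.trans hσβ
  have ht : β ^ 2 - σ ^ 2 ≠ 0 := by nlinarith
  rw [sub_mulVec_dotProduct_self, ← exp_add, ← exp_add]
  simp only [smul_mulVec, mulVec_smul, transpose_mul_self_mulVec_leastSquares hW, smul_dotProduct,
    dotProduct_smul, smul_eq_mul]
  congr 1
  field_simp
  ring

end LeastSquares

theorem sqrt_div_pow_mul_eq {σ β : ℝ} (hσ : 0 < σ) (hσβ : σ < β) (x D : ℝ) (l : ℕ) :
    √(x / ((β ^ 2 / (σ ^ 2 * (β ^ 2 - σ ^ 2))) ^ l * D)) =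
      (σ / β) ^ l * √(x * (β ^ 2 - σ ^ 2) ^ l / D) := by
  have hβ : 0 < β := hσ.trans hσβ
  have ht : β ^ 2 - σ ^ 2 ≠ 0 := by nlinarith
  rw [← sqrt_sq (by positivity : 0 ≤ (σ / β) ^ l), ← sqrt_mul (by positivity)]
  congr 1
  simp only [div_pow, mul_pow, ← pow_mul]
  field_simp
  ring

theorem evidence_a_integral_general
    (N l : ℕ) (W : Matrix (Fin N) (Fin l) ℝ) (hW : IsUnit (Wᵀ * W).det)
    (y : Fin N → ℝ) (σ β : ℝ) (hσ : 0 < σ) (hσβ : σ < β) :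
    (∫ a : Fin l → ℝ,
        Real.exp (-((y - W.mulVec a) ⬝ᵥ (y - W.mulVec a)) / (2 * σ ^ 2)) *
          Real.exp (-(a ⬝ᵥ (Wᵀ * W).mulVec a) / (2 * (β ^ 2 - σ ^ 2)))) =
      (σ / β) ^ l *
        Real.sqrt ((2 * π) ^ l * (β ^ 2 - σ ^ 2) ^ l / (Wᵀ * W).det) *
        Real.exp (-(y ⬝ᵥ (y - W.mulVec ((Wᵀ * W)⁻¹.mulVec (Wᵀ.mulVec y)))) /
          (2 * σ ^ 2)) *
        Real.exp (-((W.mulVec ((Wᵀ * W)⁻¹.mulVec (Wᵀ.mulVec y))) ⬝ᵥ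
            (W.mulVec ((Wᵀ * W)⁻¹.mulVec (Wᵀ.mulVec y)))) / (2 * β ^ 2)) := by
  have hβ : 0 < β := hσ.trans hσβ
  have ht : 0 < β ^ 2 - σ ^ 2 := by nlinarith
  have hA : (Wᵀ * W).PosDef := posDef_transpose_mul_self hW
  simp_rw [exp_residual_mul_exp_prior hW y hσ hσβ]
  rw [integral_const_mul, integral_exp_neg_dotProduct_mulVec_div_two_add (hA.smul (by positivity)),
    det_smul, Fintype.card_fin, sqrt_div_pow_mul_eq hσ hσβ]
  simp only [smul_mulVec, mulVec_smul, smul_dotProduct, dotProduct_smul, smul_eq_mul,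
    dotProduct_transpose_mul_self_mulVec, mulVec_leastSquares_dotProduct_self hW, dotProduct_sub]
  rw [← mul_assoc, ← exp_add, mul_comm, mul_assoc _ (exp _), ← exp_add]
  congr 2
  field_simp
  ring

/-- exact evaluation of the `a`-integral in the evidence. -/
theorem evidence_a_integral
    (N l : ℕ) (hN : 0 < N) (hl : 0 < l) (hle : l ≤ N)
    (W : Matrix (Fin N) (Fin l) ℝ) (hW : IsUnit (Wᵀ * W).det)
    (y : Fin N → ℝ) (σ β : ℝ) (hσ : 0 < σ) (hσβ : σ < β) :
    (∫ a : Fin l → ℝ,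
        Real.exp (-((y - W.mulVec a) ⬝ᵥ (y - W.mulVec a)) / (2 * σ ^ 2)) *
          Real.exp (-(a ⬝ᵥ (Wᵀ * W).mulVec a) / (2 * (β ^ 2 - σ ^ 2)))) =
      (σ / β) ^ l *
        Real.sqrt ((2 * π) ^ l * (β ^ 2 - σ ^ 2) ^ l / (Wᵀ * W).det) *
        Real.exp (-(y ⬝ᵥ (y - W.mulVec ((Wᵀ * W)⁻¹.mulVec (Wᵀ.mulVec y)))) /
          (2 * σ ^ 2)) *
        Real.exp (-((W.mulVec ((Wᵀ * W)⁻¹.mulVec (Wᵀ.mulVec y))) ⬝ᵥ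
            (W.mulVec ((Wᵀ * W)⁻¹.mulVec (Wᵀ.mulVec y)))) / (2 * β ^ 2)) :=
  evidence_a_integral_general N l W hW y σ β hσ hσβ
end

section
/- The evidence scales as Z(λ·y) = λ^{−N} Z(y) for every real λ > 0, where Z(y) denotes the triple integral Z(y) = ∫_0^∞ ∫_σ^∞ ∫_{ℝ^l} (1/(σβ)) · (2π)^{−(N+l)/2} · σ^{−N} · √( det(WᵀW)/(β² − σ²)^l ) · exp( −|y − W·a|²/(2σ²) ) · exp( −aᵀ(WᵀW)a/(2(β² − σ²)) ) da dβ dσ. In particular, the normalized model probability Z(y)/Σ is unchanged when y is rescaled. -/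
open Matrix MeasureTheory Real

/-- The evidence `Z(y)` as a triple integral. -/
noncomputable def evidence (N l : ℕ) (W : Matrix (Fin N) (Fin l) ℝ)
    (y : Fin N → ℝ) : ℝ :=
  ∫ σ in Set.Ioi (0 : ℝ), ∫ β in Set.Ioi σ, ∫ a : Fin l → ℝ,
    (σ * β)⁻¹ * (2 * π) ^ (-(((N : ℝ) + (l : ℝ)) / 2)) * (σ ^ N)⁻¹ *
      Real.sqrt ((Wᵀ * W).det / (β ^ 2 - σ ^ 2) ^ l) *
      Real.exp (-((y - W.mulVec a) ⬝ᵥ (y - W.mulVec a)) / (2 * σ ^ 2)) *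
      Real.exp (-(a ⬝ᵥ (Wᵀ * W).mulVec a) / (2 * (β ^ 2 - σ ^ 2)))

/-- The innermost integrand. -/
noncomputable def evInt (N l : ℕ) (W : Matrix (Fin N) (Fin l) ℝ)
    (y : Fin N → ℝ) (σ β : ℝ) (a : Fin l → ℝ) : ℝ :=
  (σ * β)⁻¹ * (2 * π) ^ (-(((N : ℝ) + (l : ℝ)) / 2)) * (σ ^ N)⁻¹ *
    Real.sqrt ((Wᵀ * W).det / (β ^ 2 - σ ^ 2) ^ l) *
    Real.exp (-((y - W.mulVec a) ⬝ᵥ (y - W.mulVec a)) / (2 * σ ^ 2)) *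
    Real.exp (-(a ⬝ᵥ (Wᵀ * W).mulVec a) / (2 * (β ^ 2 - σ ^ 2)))

noncomputable def evInner1 (N l : ℕ) (W : Matrix (Fin N) (Fin l) ℝ)
    (y : Fin N → ℝ) (σ β : ℝ) : ℝ :=
  ∫ a : Fin l → ℝ, evInt N l W y σ β a

noncomputable def evInner2 (N l : ℕ) (W : Matrix (Fin N) (Fin l) ℝ)
    (y : Fin N → ℝ) (σ : ℝ) : ℝ :=
  ∫ β in Set.Ioi σ, evInner1 N l W y σ β

lemma evidence_eq (N l : ℕ) (W : Matrix (Fin N) (Fin l) ℝ) (y : Fin N → ℝ) :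
    evidence N l W y = ∫ σ in Set.Ioi (0 : ℝ), evInner2 N l W y σ := rfl

/-- Pointwise scaling of the integrand. -/
lemma evInt_smul (N l : ℕ) (W : Matrix (Fin N) (Fin l) ℝ) (y : Fin N → ℝ)
    {lam : ℝ} (hlam : 0 < lam) (σ β : ℝ) (a : Fin l → ℝ) :
    evInt N l W (lam • y) (lam * σ) (lam * β) (lam • a)
      = (lam ^ (2 + N + l))⁻¹ * evInt N l W y σ β a := by
  have hlam2 : (lam : ℝ) ^ 2 ≠ 0 := pow_ne_zero _ hlam.ne'
  have hy : lam • y - W.mulVec (lam • a) = lam • (y - W.mulVec a) := by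
    rw [Matrix.mulVec_smul, smul_sub]
  have hd1 : (lam • (y - W.mulVec a)) ⬝ᵥ (lam • (y - W.mulVec a))
      = lam ^ 2 * ((y - W.mulVec a) ⬝ᵥ (y - W.mulVec a)) := by
    rw [smul_dotProduct, dotProduct_smul, smul_eq_mul, smul_eq_mul]; ring
  have hd2 : (lam • a) ⬝ᵥ (Wᵀ * W).mulVec (lam • a)
      = lam ^ 2 * (a ⬝ᵥ (Wᵀ * W).mulVec a) := by
    rw [Matrix.mulVec_smul, smul_dotProduct, dotProduct_smul, smul_eq_mul, smul_eq_mul]; ring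
  have hb : (lam * β) ^ 2 - (lam * σ) ^ 2 = lam ^ 2 * (β ^ 2 - σ ^ 2) := by ring
  have he1 : -(lam ^ 2 * ((y - W.mulVec a) ⬝ᵥ (y - W.mulVec a))) / (2 * (lam * σ) ^ 2)
      = -((y - W.mulVec a) ⬝ᵥ (y - W.mulVec a)) / (2 * σ ^ 2) := by
    rw [show (2 * (lam * σ) ^ 2 : ℝ) = lam ^ 2 * (2 * σ ^ 2) by ring,
      show -(lam ^ 2 * ((y - W.mulVec a) ⬝ᵥ (y - W.mulVec a)))
        = lam ^ 2 * (-((y - W.mulVec a) ⬝ᵥ (y - W.mulVec a))) by ring,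
      mul_div_mul_left _ _ hlam2]
  have he2 : -(lam ^ 2 * (a ⬝ᵥ (Wᵀ * W).mulVec a)) / (2 * ((lam * β) ^ 2 - (lam * σ) ^ 2))
      = -(a ⬝ᵥ (Wᵀ * W).mulVec a) / (2 * (β ^ 2 - σ ^ 2)) := by
    rw [hb, show (2 * (lam ^ 2 * (β ^ 2 - σ ^ 2)) : ℝ) = lam ^ 2 * (2 * (β ^ 2 - σ ^ 2)) by ring,
      show -(lam ^ 2 * (a ⬝ᵥ (Wᵀ * W).mulVec a))
        = lam ^ 2 * (-(a ⬝ᵥ (Wᵀ * W).mulVec a)) by ring,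
      mul_div_mul_left _ _ hlam2]
  have hs : Real.sqrt ((Wᵀ * W).det / ((lam * β) ^ 2 - (lam * σ) ^ 2) ^ l)
      = (lam ^ l)⁻¹ * Real.sqrt ((Wᵀ * W).det / (β ^ 2 - σ ^ 2) ^ l) := by
    rw [hb, mul_pow, show ((lam ^ 2) ^ l : ℝ) = (lam ^ l) ^ 2 by
        rw [← pow_mul, ← pow_mul, mul_comm],
      show (Wᵀ * W).det / ((lam ^ l) ^ 2 * (β ^ 2 - σ ^ 2) ^ l)
        = ((lam ^ l) ^ 2)⁻¹ * ((Wᵀ * W).det / (β ^ 2 - σ ^ 2) ^ l) by ring,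
      Real.sqrt_mul (by positivity), Real.sqrt_inv, Real.sqrt_sq (by positivity)]
  unfold evInt
  rw [hy, hd1, hd2, he1, he2, hs, pow_add, pow_add]
  ring

lemma evInner1_smul (N l : ℕ) (W : Matrix (Fin N) (Fin l) ℝ) (y : Fin N → ℝ)
    {lam : ℝ} (hlam : 0 < lam) (σ β : ℝ) :
    evInner1 N l W (lam • y) (lam * σ) (lam * β)
      = (lam ^ (2 + N))⁻¹ * evInner1 N l W y σ β := by
  have hll : (lam ^ l : ℝ) ≠ 0 := pow_ne_zero _ hlam.ne'
  have h := MeasureTheory.Measure.integral_comp_smul (volume : Measure (Fin l → ℝ))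
    (fun a => evInt N l W (lam • y) (lam * σ) (lam * β) a) lam
  simp only [Module.finrank_pi, Fintype.card_fin, smul_eq_mul] at h
  rw [abs_of_pos (show (0:ℝ) < (lam ^ l)⁻¹ by positivity)] at h
  have h2 : (∫ a : Fin l → ℝ, evInt N l W (lam • y) (lam * σ) (lam * β) (lam • a))
      = (lam ^ (2 + N + l))⁻¹ * evInner1 N l W y σ β := by
    simp only [evInt_smul N l W y hlam σ β]
    rw [MeasureTheory.integral_const_mul]; rfl
  rw [h2] at h
  have h3 := congrArg (fun t => lam ^ l * t) h
  simp only [← mul_assoc] at h3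
  rw [mul_inv_cancel₀ hll, one_mul] at h3
  rw [show evInner1 N l W (lam • y) (lam * σ) (lam * β)
      = ∫ x : Fin l → ℝ, evInt N l W (lam • y) (lam * σ) (lam * β) x from rfl, ← h3]
  congr 1
  rw [pow_add lam (2 + N) l]
  field_simp

lemma evInner2_smul (N l : ℕ) (W : Matrix (Fin N) (Fin l) ℝ) (y : Fin N → ℝ)
    {lam : ℝ} (hlam : 0 < lam) (σ : ℝ) :
    evInner2 N l W (lam • y) (lam * σ) = (lam ^ (1 + N))⁻¹ * evInner2 N l W y σ := by
  have h := integral_comp_mul_left_Ioi (fun β => evInner1 N l W (lam • y) (lam * σ) β) σ hlam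
  simp only [smul_eq_mul] at h
  have h2 : (∫ β in Set.Ioi σ, evInner1 N l W (lam • y) (lam * σ) (lam * β))
      = (lam ^ (2 + N))⁻¹ * evInner2 N l W y σ := by
    simp only [evInner1_smul N l W y hlam σ]
    rw [MeasureTheory.integral_const_mul]; rfl
  rw [h2] at h
  have h3 := congrArg (fun t => lam * t) h
  simp only [← mul_assoc] at h3
  rw [mul_inv_cancel₀ hlam.ne', one_mul] at h3
  rw [show evInner2 N l W (lam • y) (lam * σ)
      = ∫ β in Set.Ioi (lam * σ), evInner1 N l W (lam • y) (lam * σ) β from rfl, ← h3]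
  congr 1
  rw [pow_add lam 1 N, pow_add lam 2 N, pow_one]
  have h2' : (lam : ℝ) ^ 2 ≠ 0 := pow_ne_zero _ hlam.ne'
  field_simp

lemma evidence_smul (N l : ℕ) (W : Matrix (Fin N) (Fin l) ℝ) (y : Fin N → ℝ)
    {lam : ℝ} (hlam : 0 < lam) :
    evidence N l W (lam • y) = (lam ^ N)⁻¹ * evidence N l W y := by
  have h := integral_comp_mul_left_Ioi (fun σ => evInner2 N l W (lam • y) σ) 0 hlam
  simp only [smul_eq_mul, mul_zero] at h
  have h2 : (∫ σ in Set.Ioi (0 : ℝ), evInner2 N l W (lam • y) (lam * σ))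
      = (lam ^ (1 + N))⁻¹ * evidence N l W y := by
    simp only [evInner2_smul N l W y hlam]
    rw [MeasureTheory.integral_const_mul, ← evidence_eq]
  rw [h2] at h
  have h3 := congrArg (fun t => lam * t) h
  simp only [← mul_assoc] at h3
  rw [mul_inv_cancel₀ hlam.ne', one_mul] at h3
  rw [evidence_eq, ← h3]
  congr 1
  rw [pow_add lam 1 N, pow_one]
  field_simp

/-- the evidence scales as `Z(λ·y) = λ^{−N} Z(y)` for `λ > 0`;
in particular the normalized model probability is unchanged under rescaling. -/
theorem evidence_scaling
    (N l : ℕ) (hN : 0 < N) (hl : 0 < l) (hlN : l < N)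
    (W : Matrix (Fin N) (Fin l) ℝ) (hW : IsUnit (Wᵀ * W).det)
    (y : Fin N → ℝ) (lam : ℝ) (hlam : 0 < lam) :
    evidence N l W (lam • y) = lam ^ (-(N : ℝ)) * evidence N l W y ∧
    ∀ (L : ℕ) (Ws : Fin L → Matrix (Fin N) (Fin l) ℝ),
      (∀ j, IsUnit ((Ws j)ᵀ * Ws j).det) →
      ∀ i : Fin L,
        evidence N l (Ws i) (lam • y) / (∑ j, evidence N l (Ws j) (lam • y)) =
          evidence N l (Ws i) y / (∑ j, evidence N l (Ws j) y) := by
  have hr : lam ^ (-(N : ℝ)) = ((lam ^ N : ℝ))⁻¹ := by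
    rw [Real.rpow_neg hlam.le, Real.rpow_natCast]
  constructor
  · rw [hr]; exact evidence_smul N l W y hlam
  · intro L Ws _ i
    have hc : ((lam ^ N : ℝ))⁻¹ ≠ 0 := by positivity
    simp only [evidence_smul N l _ y hlam, ← Finset.mul_sum]
    rw [mul_div_mul_left _ _ hc]
end

section
/- The evidence depends on the data only through the fitted vector: if W₁ and W₂ are two real N×l matrices, each with invertible Gram matrix, such that for the given y ∈ ℝ^N the fitted vectors coincide, W₁(W₁ᵀW₁)⁻¹W₁ᵀ y = W₂(W₂ᵀW₂)⁻¹W₂ᵀ y, then Z₁(y) = Z₂(y), where Z_i(y) = ∫_0^∞ ∫_σ^∞ ∫_{ℝ^l} (1/(σβ)) · (2π)^{−(N+l)/2} · σ^{−N} · √( det(W_iᵀW_i)/(β² − σ²)^l ) · exp( −|y − W_i·a|²/(2σ²) ) · exp( −aᵀ(W_iᵀW_i)a/(2(β² − σ²)) ) da dβ dσ. -/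
/-!
For fixed `σ < β` the inner integral is Gaussian in `a`. Completing the square, using that the
residual `y - ŷ` is orthogonal to the column space of `W`, turns the exponent into
`-(1/σ² + 1/(β² - σ²)) |W (a - r b)|² / 2` plus a term depending on `y` only through `y ⬝ ŷ`, where
`b = (WᵀW)⁻¹Wᵀy` and `r = (β² - σ²)/β²`. The Gaussian integral of the first part produces a factor
`det(WᵀW)^(-1/2)`, which cancels the `√det(WᵀW)` in the prior's normalisation, so the integrand of
the two outer integrals depends on `W` only through `ŷ`.
-/

open Matrix MeasureTheory Real

section Gaussian

variable {ι : Type*} [Fintype ι]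

theorem integral_exp_neg_mul_dotProduct_self (c : ℝ) :
    ∫ v : ι → ℝ, exp (-(c * (v ⬝ᵥ v))) = √(π / c) ^ Fintype.card ι := by
  have hprod (v : ι → ℝ) : exp (-(c * (v ⬝ᵥ v))) = ∏ i, exp (-c * v i ^ 2) := by
    rw [← exp_sum, dotProduct, Finset.mul_sum, ← Finset.sum_neg_distrib]
    simp only [sq, neg_mul]
  simp_rw [hprod]
  rw [integral_fintype_prod_volume_eq_pow (fun x : ℝ => exp (-c * x ^ 2)), integral_gaussian]

variable [DecidableEq ι]

theorem integral_comp_mulVec {E : Type*} [NormedAddCommGroup E] [NormedSpace ℝ E]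
    {S : Matrix ι ι ℝ} (hS : S.det ≠ 0) (f : (ι → ℝ) → E) :
    ∫ a, f (S *ᵥ a) = |S.det|⁻¹ • ∫ v, f v := by
  let e := (S.toLinearEquiv' (S.invertibleOfIsUnitDet hS.isUnit)).toContinuousLinearEquiv
  have hmap : Measure.map e volume = ENNReal.ofReal |S.det⁻¹| • volume := by
    have := Real.map_linearMap_volume_pi_eq_smul_volume_pi (f := toLin' S)
      (by rwa [LinearMap.det_toLin'])
    rwa [LinearMap.det_toLin'] at this
  have hchange := e.toHomeomorph.measurableEmbedding.integral_map (μ := volume) f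
  rw [show ⇑e.toHomeomorph = ⇑e from rfl, hmap, integral_smul_measure,
    ENNReal.toReal_ofReal (abs_nonneg _), abs_inv] at hchange
  exact hchange.symm

open scoped MatrixOrder in
theorem Matrix.PosDef.integral_exp_neg_mul_dotProduct_mulVec {G : Matrix ι ι ℝ} (hG : G.PosDef)
    (c : ℝ) :
    ∫ a, exp (-(c * (a ⬝ᵥ G *ᵥ a))) = (√G.det)⁻¹ * √(π / c) ^ Fintype.card ι := by
  obtain ⟨B, rfl⟩ := CStarAlgebra.nonneg_iff_eq_star_mul_self.mp hG.posSemidef.nonneg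
  have hdet : (star B * B).det = B.det ^ 2 := by
    rw [det_mul, star_eq_conjTranspose, det_conjTranspose, star_trivial, sq]
  have hB : B.det ≠ 0 := by
    have hpos := hG.det_pos
    rw [hdet] at hpos
    exact (pow_ne_zero_iff two_ne_zero).mp hpos.ne'
  have hquad (a : ι → ℝ) : a ⬝ᵥ (star B * B) *ᵥ a = B *ᵥ a ⬝ᵥ B *ᵥ a := by
    rw [← mulVec_mulVec, dotProduct_mulVec, star_eq_conjTranspose,
      conjTranspose_eq_transpose_of_trivial, vecMul_transpose]
  simp_rw [hquad]
  rw [integral_comp_mulVec hB (fun v => exp (-(c * (v ⬝ᵥ v)))),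
    integral_exp_neg_mul_dotProduct_self, hdet, sqrt_sq_eq_abs, smul_eq_mul]

end Gaussian

section LeastSquares

variable {κ ι : Type*} [Fintype κ] [Fintype ι]

theorem dotProduct_sub_div_add_div_eq_of_orthogonal {y p q : κ → ℝ}
    (hp : (y - q) ⬝ᵥ p = 0) (hq : (y - q) ⬝ᵥ q = 0) {s t : ℝ} (hs : 0 < s) (ht : 0 < t) :
    (y - p) ⬝ᵥ (y - p) / s + p ⬝ᵥ p / t =
      (1 / s + 1 / t) * ((p - (t / (s + t)) • q) ⬝ᵥ (p - (t / (s + t)) • q)) +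
        (y ⬝ᵥ y - t / (s + t) * (y ⬝ᵥ q)) / s := by
  rw [sub_dotProduct, sub_eq_zero] at hp hq
  simp only [sub_dotProduct, dotProduct_sub, smul_dotProduct, dotProduct_smul, smul_eq_mul,
    dotProduct_comm p y, dotProduct_comm p q, hp, hq]
  field_simp
  ring

theorem dotProduct_transpose_mul_self_mulVec_s10 (W : Matrix κ ι ℝ) (a : ι → ℝ) :
    a ⬝ᵥ (Wᵀ * W) *ᵥ a = W *ᵥ a ⬝ᵥ W *ᵥ a := by
  rw [← mulVec_mulVec, dotProduct_mulVec, vecMul_transpose]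

variable [DecidableEq ι]

theorem posDef_transpose_mul_self_of_isUnit_det {W : Matrix κ ι ℝ} (hW : IsUnit (Wᵀ * W).det) :
    (Wᵀ * W).PosDef := by
  rw [← conjTranspose_eq_transpose_of_trivial]
  exact (posSemidef_conjTranspose_mul_self W).posDef_iff_det_ne_zero.mpr hW.ne_zero

noncomputable def fittedVector (W : Matrix κ ι ℝ) (y : κ → ℝ) : κ → ℝ :=
  W *ᵥ ((Wᵀ * W)⁻¹ *ᵥ (Wᵀ *ᵥ y))

theorem sub_fittedVector_dotProduct_mulVec {W : Matrix κ ι ℝ} (hW : IsUnit (Wᵀ * W).det)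
    (y : κ → ℝ) (a : ι → ℝ) : (y - fittedVector W y) ⬝ᵥ W *ᵥ a = 0 := by
  rw [dotProduct_mulVec, ← mulVec_transpose, fittedVector, mulVec_sub, mulVec_mulVec (M := Wᵀ),
    mulVec_mulVec, mul_nonsing_inv _ hW, one_mulVec, sub_self, zero_dotProduct]

theorem integral_exp_residual_mul_exp_prior {W : Matrix κ ι ℝ} (hW : IsUnit (Wᵀ * W).det)
    (y : κ → ℝ) {s t : ℝ} (hs : 0 < s) (ht : 0 < t) :
    ∫ a, exp (-((y - W *ᵥ a) ⬝ᵥ (y - W *ᵥ a)) / (2 * s)) *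
        exp (-(a ⬝ᵥ (Wᵀ * W) *ᵥ a) / (2 * t)) =
      (√(Wᵀ * W).det)⁻¹ * √(π / ((1 / s + 1 / t) / 2)) ^ Fintype.card ι *
        exp (-(y ⬝ᵥ y - t / (s + t) * (y ⬝ᵥ fittedVector W y)) / (2 * s)) := by
  set b := (Wᵀ * W)⁻¹ *ᵥ (Wᵀ *ᵥ y)
  set r := t / (s + t)
  have hsquare (a : ι → ℝ) :
      exp (-((y - W *ᵥ a) ⬝ᵥ (y - W *ᵥ a)) / (2 * s)) * exp (-(a ⬝ᵥ (Wᵀ * W) *ᵥ a) / (2 * t)) =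
        exp (-((1 / s + 1 / t) / 2 * ((a - r • b) ⬝ᵥ (Wᵀ * W) *ᵥ (a - r • b)))) *
          exp (-(y ⬝ᵥ y - r * (y ⬝ᵥ fittedVector W y)) / (2 * s)) := by
    rw [← exp_add, ← exp_add, dotProduct_transpose_mul_self_mulVec_s10,
      dotProduct_transpose_mul_self_mulVec_s10, mulVec_sub, mulVec_smul,
      show W *ᵥ b = fittedVector W y from rfl]
    have hcomplete := dotProduct_sub_div_add_div_eq_of_orthogonal
      (sub_fittedVector_dotProduct_mulVec hW y a) (sub_fittedVector_dotProduct_mulVec hW y b) hs ht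
    congr 1
    linear_combination (-1 / 2 : ℝ) * hcomplete
  simp_rw [hsquare]
  rw [integral_mul_const, integral_sub_right_eq_self
      (fun a => exp (-((1 / s + 1 / t) / 2 * (a ⬝ᵥ (Wᵀ * W) *ᵥ a)))),
    (posDef_transpose_mul_self_of_isUnit_det hW).integral_exp_neg_mul_dotProduct_mulVec]

theorem integral_mul_sqrt_det_div_mul_exp_residual_mul_exp_prior {l : ℕ}
    {W : Matrix κ (Fin l) ℝ} (hW : IsUnit (Wᵀ * W).det) (y : κ → ℝ) (K : ℝ) {s t : ℝ}
    (hs : 0 < s) (ht : 0 < t) :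
    ∫ a : Fin l → ℝ, K * √((Wᵀ * W).det / t ^ l) *
        exp (-((y - W *ᵥ a) ⬝ᵥ (y - W *ᵥ a)) / (2 * s)) *
        exp (-(a ⬝ᵥ (Wᵀ * W) *ᵥ a) / (2 * t)) =
      K * (√(t ^ l))⁻¹ * √(π / ((1 / s + 1 / t) / 2)) ^ l *
        exp (-(y ⬝ᵥ y - t / (s + t) * (y ⬝ᵥ fittedVector W y)) / (2 * s)) := by
  have hdet := (posDef_transpose_mul_self_of_isUnit_det hW).det_pos
  simp only [mul_assoc, integral_const_mul]
  simp only [← mul_assoc, integral_exp_residual_mul_exp_prior hW y hs ht, Fintype.card_fin,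
    sqrt_div' _ (pow_nonneg ht.le l)]
  field_simp

end LeastSquares

theorem evidence_depends_only_on_fitted_vector_general
    (N l : ℕ)
    (W₁ W₂ : Matrix (Fin N) (Fin l) ℝ)
    (hW₁ : IsUnit (W₁ᵀ * W₁).det) (hW₂ : IsUnit (W₂ᵀ * W₂).det)
    (y : Fin N → ℝ)
    (hfit : W₁.mulVec ((W₁ᵀ * W₁)⁻¹.mulVec (W₁ᵀ.mulVec y)) =
            W₂.mulVec ((W₂ᵀ * W₂)⁻¹.mulVec (W₂ᵀ.mulVec y))) :
    evidence N l W₁ y = evidence N l W₂ y := by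
  unfold evidence
  refine setIntegral_congr_fun measurableSet_Ioi fun σ (hσ : 0 < σ) =>
    setIntegral_congr_fun measurableSet_Ioi fun β (hβ : σ < β) => ?_
  have hs : 0 < σ ^ 2 := by positivity
  have ht : 0 < β ^ 2 - σ ^ 2 := by nlinarith
  simp only [integral_mul_sqrt_det_div_mul_exp_residual_mul_exp_prior hW₁ y _ hs ht,
    integral_mul_sqrt_det_div_mul_exp_residual_mul_exp_prior hW₂ y _ hs ht]
  rw [show fittedVector W₁ y = fittedVector W₂ y from hfit]

/-- the evidence depends on the data only through the fitted vector. -/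
theorem evidence_depends_only_on_fitted_vector
    (N l : ℕ) (hN : 0 < N) (hl : 0 < l) (hlN : l < N)
    (W₁ W₂ : Matrix (Fin N) (Fin l) ℝ)
    (hW₁ : IsUnit (W₁ᵀ * W₁).det) (hW₂ : IsUnit (W₂ᵀ * W₂).det)
    (y : Fin N → ℝ)
    (hfit : W₁.mulVec ((W₁ᵀ * W₁)⁻¹.mulVec (W₁ᵀ.mulVec y)) =
            W₂.mulVec ((W₂ᵀ * W₂)⁻¹.mulVec (W₂ᵀ.mulVec y))) :
    evidence N l W₁ y = evidence N l W₂ y :=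
  evidence_depends_only_on_fitted_vector_general N l W₁ W₂ hW₁ hW₂ y hfit
end
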